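/- arXiv:1407.4520 — 9 statements merged into one kernel-verified Lean document; each statement's English description precedes it below -/
import Mathlib

section
/- (Theorem 3.1) Let M be a 0–1 matrix with m rows and n columns (m, n ≥ 1), with row densities δ_i = |S_i|/n, and let k be a natural number with k ≤ n. If ∑_{i=1}^{m} (1 − δ_i)^k < 1, then there exists a set J of columns with |J| = k that covers M, i.e., every row i has some j ∈ J with M i j = true. -/
open Finset

lemma choose_nat_ineq (n a k : ℕ) (ha : a ≤ n) :
    n ^ k * a.choose k * k.factorial ≤ a ^ k * n.choose k * k.factorial := by
  have key : n ^ k * a.descFactorial k ≤ a ^ k * n.descFactorial k := by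
    rw [Nat.descFactorial_eq_prod_range, Nat.descFactorial_eq_prod_range]
    have e1 : n ^ k * ∏ i ∈ range k, (a - i) = ∏ i ∈ range k, (n * (a - i)) := by
      rw [Finset.prod_mul_distrib, Finset.prod_const, Finset.card_range]
    have e2 : a ^ k * ∏ i ∈ range k, (n - i) = ∏ i ∈ range k, (a * (n - i)) := by
      rw [Finset.prod_mul_distrib, Finset.prod_const, Finset.card_range]
    rw [e1, e2]
    apply Finset.prod_le_prod' ?_
    intro t ht
    rcases le_or_gt a t with h1 | h1
    · simp [Nat.sub_eq_zero_of_le h1]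
    · have h2 : t ≤ n := le_trans h1.le ha
      zify [h1.le, h2]
      nlinarith [Nat.sub_add_cancel h1.le, Nat.sub_add_cancel h2]
  calc n ^ k * a.choose k * k.factorial = n ^ k * a.descFactorial k := by
        rw [Nat.descFactorial_eq_factorial_mul_choose]; ring
    _ ≤ a ^ k * n.descFactorial k := key
    _ = a ^ k * n.choose k * k.factorial := by
        rw [Nat.descFactorial_eq_factorial_mul_choose]; ring

lemma choose_real_ineq (n a k : ℕ) (ha : a ≤ n) (hn : 1 ≤ n) :
    ((a.choose k : ℝ)) ≤ ((a : ℝ) / n) ^ k * (n.choose k) := by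
  have h := choose_nat_ineq n a k ha
  have h2 : n ^ k * a.choose k ≤ a ^ k * n.choose k :=
    Nat.le_of_mul_le_mul_right h k.factorial_pos
  have hnr : (0 : ℝ) < (n : ℝ) ^ k := by positivity
  rw [div_pow, div_mul_eq_mul_div, le_div_iff₀ hnr]
  calc (a.choose k : ℝ) * (n : ℝ) ^ k = ((n ^ k * a.choose k : ℕ) : ℝ) := by push_cast; ring
    _ ≤ ((a ^ k * n.choose k : ℕ) : ℝ) := by exact_mod_cast Nat.cast_le.mpr h2
    _ = (a : ℝ) ^ k * (n.choose k) := by push_cast; ring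

/-- **Theorem 3.1.** Let `M` be a 0–1 matrix with `m` rows and `n` columns, with row
densities `δ_i = |S_i| / n`. If `∑_i (1 - δ_i)^k < 1` (with `k ≤ n`), then there is a
set `J` of columns of cardinality `k` covering every row of `M`. -/
theorem stmt_1 {m n : ℕ} (hm : 1 ≤ m) (hn : 1 ≤ n)
    (M : Fin m → Fin n → Bool) (k : ℕ) (hk : k ≤ n)
    (h : ∑ i : Fin m,
        (1 - ((univ.filter (fun j : Fin n => M i j = true)).card : ℝ) / (n : ℝ)) ^ k < 1) :
    ∃ J : Finset (Fin n), J.card = k ∧ ∀ i : Fin m, ∃ j ∈ J, M i j = true := by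
  by_contra hc
  push_neg at hc
  -- complements of supports
  set s : Fin m → ℕ := fun i => (univ.filter (fun j : Fin n => M i j = true)).card with hs
  have hsle : ∀ i, s i ≤ n := fun i => by
    simpa using (Finset.card_filter_le univ (fun j : Fin n => M i j = true))
  have hcompl : ∀ i, (univ.filter (fun j : Fin n => M i j = false)).card = n - s i := by
    intro i
    have h1 : (univ.filter (fun j : Fin n => M i j = false))
        = univ \ (univ.filter (fun j : Fin n => M i j = true)) := by
      ext j; simp
    rw [h1, Finset.card_sdiff_of_subset (Finset.filter_subset _ _)]
    simp [hs]
  -- every k-subset is contained in some "bad" family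
  have hsub : (univ : Finset (Fin n)).powersetCard k ⊆
      (univ : Finset (Fin m)).biUnion
        (fun i => (univ.filter (fun j : Fin n => M i j = false)).powersetCard k) := by
    intro J hJ
    rw [Finset.mem_powersetCard] at hJ
    obtain ⟨i, hi⟩ := hc J hJ.2
    rw [Finset.mem_biUnion]
    refine ⟨i, Finset.mem_univ i, ?_⟩
    rw [Finset.mem_powersetCard]
    refine ⟨fun j hj => ?_, hJ.2⟩
    simpa using hi j hj
  have hcard : n.choose k ≤ ∑ i : Fin m, (n - s i).choose k := by
    calc n.choose k = ((univ : Finset (Fin n)).powersetCard k).card := by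
          rw [Finset.card_powersetCard, Finset.card_univ, Fintype.card_fin]
      _ ≤ _ := Finset.card_le_card hsub
      _ ≤ ∑ i : Fin m, ((univ.filter (fun j : Fin n => M i j = false)).powersetCard k).card :=
          Finset.card_biUnion_le
      _ = ∑ i : Fin m, (n - s i).choose k := by
          refine Finset.sum_congr rfl fun i _ => ?_
          rw [Finset.card_powersetCard, hcompl i]
  have hC : (0 : ℝ) < (n.choose k : ℝ) := by
    exact_mod_cast Nat.choose_pos hk
  have hreal : (n.choose k : ℝ) ≤ ∑ i : Fin m, ((n - s i).choose k : ℝ) := by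
    exact_mod_cast hcard
  have hstep : ∑ i : Fin m, ((n - s i).choose k : ℝ) < (n.choose k : ℝ) := by
    calc ∑ i : Fin m, ((n - s i).choose k : ℝ)
        ≤ ∑ i : Fin m, (((n - s i : ℕ) : ℝ) / n) ^ k * (n.choose k : ℝ) :=
          Finset.sum_le_sum fun i _ => choose_real_ineq n (n - s i) k (Nat.sub_le n (s i)) hn
      _ = (∑ i : Fin m, (1 - (s i : ℝ) / n) ^ k) * (n.choose k : ℝ) := by
          rw [Finset.sum_mul]
          refine Finset.sum_congr rfl fun i _ => ?_
          congr 2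
          have : ((n - s i : ℕ) : ℝ) = (n : ℝ) - (s i : ℝ) := by
            exact_mod_cast Nat.cast_sub (hsle i)
          rw [this, sub_div, div_self (by positivity)]
      _ < 1 * (n.choose k : ℝ) := by
          apply mul_lt_mul_of_pos_right _ hC
          exact h
      _ = (n.choose k : ℝ) := one_mul _
  linarith
end

section
/- (Corollary 3.2) Let M be a 0–1 matrix with m rows and n columns (m, n ≥ 1) and let δ ∈ (0, 1) be such that every row density satisfies δ_i ≥ δ. Then for every natural number k with k ≤ n and k > (log m)/|log(1−δ)|, there exists a set J of columns with |J| = k that covers M. -/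
open Finset

/-- **Corollary 3.2.** Let `M` be a 0–1 matrix with `m` rows and `n` columns and
`δ ∈ (0,1)` with every row density at least `δ`. Then for every `k ≤ n` with
`k > log m / |log (1-δ)|` there is a covering set of columns of cardinality `k`. -/
theorem stmt_2 {m n : ℕ} (hm : 1 ≤ m) (hn : 1 ≤ n)
    (M : Fin m → Fin n → Bool) (δ : ℝ) (hδ0 : 0 < δ) (hδ1 : δ < 1)
    (hdens : ∀ i : Fin m,
      δ ≤ ((univ.filter (fun j : Fin n => M i j = true)).card : ℝ) / (n : ℝ))
    (k : ℕ) (hk : k ≤ n)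
    (hklog : (k : ℝ) > Real.log m / (-Real.log (1 - δ))) :
    ∃ J : Finset (Fin n), J.card = k ∧ ∀ i : Fin m, ∃ j ∈ J, M i j = true := by
  classical
  set uncov : Finset (Fin n) → Finset (Fin m) :=
    fun J => univ.filter (fun i => ∀ j ∈ J, ¬ (M i j = true)) with huncov
  have hδ1' : (0:ℝ) < 1 - δ := by linarith
  -- greedy key lemma
  have key : ∀ t, t ≤ n → ∃ J : Finset (Fin n), J.card = t ∧
      ((uncov J).card : ℝ) ≤ (1-δ)^t * m := by
    intro t
    induction t with
    | zero =>
      intro _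
      refine ⟨∅, rfl, ?_⟩
      simp only [pow_zero, one_mul]
      exact_mod_cast Finset.card_le_card (Finset.filter_subset _ _) |>.trans
        (by simp)
    | succ t ih =>
      intro ht
      obtain ⟨J, hJc, hJb⟩ := ih (Nat.le_of_succ_le ht)
      set R := uncov J with hR
      by_cases hRne : R.Nonempty
      · -- counting: some column hits at least δ * |R| rows of R
        have hsum : (δ * n) * R.card ≤
            ∑ j : Fin n, ((R.filter (fun i => M i j = true)).card : ℝ) := by
          have swap : ∑ j : Fin n, ((R.filter (fun i => M i j = true)).card : ℝ)
              = ∑ i ∈ R, ((univ.filter (fun j : Fin n => M i j = true)).card : ℝ) := by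
            push_cast [Finset.card_filter]
            rw [Finset.sum_comm' ]
            · simp
          rw [swap]
          calc (δ * n) * R.card = ∑ _i ∈ R, δ * n := by
                rw [Finset.sum_const, nsmul_eq_mul]; ring
            _ ≤ _ := by
                apply Finset.sum_le_sum
                intro i _
                have := hdens i
                have hn0 : (0:ℝ) < n := by exact_mod_cast hn
                rw [le_div_iff₀ hn0] at this
                linarith
        -- find maximizing column
        have hex : ∃ j : Fin n, δ * R.card ≤
            ((R.filter (fun i => M i j = true)).card : ℝ) := by
          by_contra hcon
          push_neg at hcon
          have : ∑ j : Fin n, ((R.filter (fun i => M i j = true)).card : ℝ)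
              < ∑ _j : Fin n, δ * R.card :=
            Finset.sum_lt_sum_of_nonempty ⟨⟨0, hn⟩, Finset.mem_univ _⟩
              (fun j _ => hcon j)
          rw [Finset.sum_const, nsmul_eq_mul, Finset.card_univ, Fintype.card_fin] at this
          nlinarith
        obtain ⟨j, hj⟩ := hex
        have hRpos : (0:ℝ) < R.card := by
          exact_mod_cast Finset.card_pos.mpr hRne
        have hhitpos : (0:ℝ) < ((R.filter (fun i => M i j = true)).card : ℝ) := by
          have : 0 < δ * R.card := mul_pos hδ0 hRpos
          linarith
        have hhitne : (R.filter (fun i => M i j = true)).Nonempty := by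
          rw [← Finset.card_pos]; exact_mod_cast hhitpos
        obtain ⟨i0, hi0⟩ := hhitne
        rw [Finset.mem_filter] at hi0
        have hjJ : j ∉ J := by
          intro hjJ
          have := hi0.1
          rw [hR, huncov, Finset.mem_filter] at this
          exact this.2 j hjJ hi0.2
        refine ⟨insert j J, by rw [Finset.card_insert_of_notMem hjJ, hJc], ?_⟩
        have huncov' : uncov (insert j J) = R.filter (fun i => ¬ (M i j = true)) := by
          ext i
          simp only [huncov, hR, Finset.mem_filter, Finset.mem_univ, true_and,
            Finset.mem_insert]
          constructor
          · intro h
            exact ⟨fun j' hj' => h j' (Or.inr hj'), h j (Or.inl rfl)⟩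
          · rintro ⟨h1, h2⟩ j' (rfl | hj')
            · exact h2
            · exact h1 j' hj'
        rw [huncov']
        have hsplit := Finset.card_filter_add_card_filter_not
          (s := R) (p := fun i => M i j = true)
        have hsplit' : ((R.filter (fun i => M i j = true)).card : ℝ)
            + ((R.filter (fun i => ¬ (M i j = true))).card : ℝ) = (R.card : ℝ) := by
          exact_mod_cast hsplit
        have hstep : ((R.filter (fun i => ¬ (M i j = true))).card : ℝ)
            ≤ (1 - δ) * R.card := by nlinarith
        calc ((R.filter (fun i => ¬ (M i j = true))).card : ℝ)
            ≤ (1 - δ) * R.card := hstep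
          _ ≤ (1 - δ) * ((1-δ)^t * m) := by
              apply mul_le_mul_of_nonneg_left hJb (le_of_lt hδ1')
          _ = (1-δ)^(t+1) * m := by ring
      · -- R empty: just add any new column
        have hJn : J.card < n := by omega
        have : (univ \ J).Nonempty := by
          rw [← Finset.card_pos, Finset.card_sdiff_of_subset (Finset.subset_univ _),
            Finset.card_univ, Fintype.card_fin]
          omega
        obtain ⟨j, hj⟩ := this
        have hjJ : j ∉ J := (Finset.mem_sdiff.mp hj).2
        refine ⟨insert j J, by rw [Finset.card_insert_of_notMem hjJ, hJc], ?_⟩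
        have hsub : uncov (insert j J) ⊆ R := by
          intro i hi
          have hi' : ∀ j' ∈ insert j J, ¬ (M i j' = true) :=
            (Finset.mem_filter.mp hi).2
          exact Finset.mem_filter.mpr ⟨Finset.mem_univ i,
            fun j' hj' => hi' j' (Finset.mem_insert_of_mem hj')⟩
        have : uncov (insert j J) = ∅ := by
          rw [Finset.not_nonempty_iff_eq_empty] at hRne
          exact Finset.subset_empty.mp (hRne ▸ hsub)
        rw [this]
        simp only [Finset.card_empty, Nat.cast_zero]
        positivity
  obtain ⟨J, hJc, hJb⟩ := key k hk
  refine ⟨J, hJc, ?_⟩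
  -- show (1-δ)^k * m < 1
  have hL : 0 < -Real.log (1 - δ) := by
    have := Real.log_neg hδ1' (by linarith)
    linarith
  have hkL : Real.log m < k * (-Real.log (1 - δ)) := by
    rw [gt_iff_lt, div_lt_iff₀ hL] at hklog
    exact hklog
  have hm0 : (0:ℝ) < m := by exact_mod_cast hm
  have hpow : (1-δ)^k * m < 1 := by
    have h1 : (1-δ)^k = Real.exp (k * Real.log (1-δ)) := by
      rw [← Real.log_pow, Real.exp_log (by positivity)]
    have h2 : Real.exp (k * Real.log (1-δ)) < Real.exp (-Real.log m) := by
      apply Real.exp_lt_exp.mpr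
      nlinarith
    rw [h1]
    calc Real.exp (k * Real.log (1-δ)) * m < Real.exp (-Real.log m) * m :=
          mul_lt_mul_of_pos_right h2 hm0
      _ = 1 := by rw [Real.exp_neg, Real.exp_log hm0, inv_mul_cancel₀ (ne_of_gt hm0)]
  have huempty : (uncov J).card = 0 := by
    by_contra h
    have : (1:ℝ) ≤ (uncov J).card := by
      exact_mod_cast Nat.one_le_iff_ne_zero.mpr h
    linarith
  intro i
  have : i ∉ uncov J := by
    rw [Finset.card_eq_zero] at huempty
    simp [huempty]
  rw [huncov, Finset.mem_filter] at this
  push_neg at this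
  obtain ⟨j, hj1, hj2⟩ := this (Finset.mem_univ i)
  exact ⟨j, hj1, by simpa using hj2⟩
end

section
/- (Refined bound via Bonferroni, condition (3.10)) Let M be a 0–1 matrix with m rows and n columns with row supports S_1, …, S_m ⊆ {1,…,n}, and let k ≤ n be a natural number. If ∑_{i} C(n − |S_i|, k) − ∑_{i<j} C(n − |S_i ∪ S_j|, k) + ∑_{i<j<l} C(n − |S_i ∪ S_j ∪ S_l|, k) < C(n, k), then there exists a set J of columns with |J| = k that covers M. (By inclusion–exclusion, |S_i ∪ S_j| = |S_i| + |S_j| − |S_i ∩ S_j| and |S_i ∪ S_j ∪ S_l| = |S_i|+|S_j|+|S_l| − |S_i∩S_j| − |S_i∩S_l| − |S_j∩S_l| + |S_i∩S_j∩S_l|, so this is the paper's condition written with the overlaps γ_{ij} and γ_{ijl}.) -/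
open Finset

private theorem cover_lemA {n k : ℕ} (T : Finset (Fin n)) :
    (((univ : Finset (Fin n)).powersetCard k).filter (fun J => J ∩ T = ∅)).card
      = (n - T.card).choose k := by
  have : ((univ : Finset (Fin n)).powersetCard k).filter (fun J => J ∩ T = ∅)
      = Tᶜ.powersetCard k := by
    ext J
    simp only [Finset.mem_filter, Finset.mem_powersetCard, Finset.subset_univ, true_and,
      ← Finset.disjoint_iff_inter_eq_empty, ← le_compl_iff_disjoint_right, Finset.le_iff_subset,
      and_comm]
  rw [this, Finset.card_powersetCard, Finset.card_compl, Fintype.card_fin]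

private theorem cover_bonf (r : ℕ) (hr : 1 ≤ r) : r.choose 2 + 1 ≤ r + r.choose 3 := by
  induction r, hr using Nat.le_induction with
  | base => simp
  | succ r hr ih =>
    have h1 : (r+1).choose 2 = r.choose 1 + r.choose 2 := Nat.choose_succ_succ r 1
    have h2 : (r+1).choose 3 = r.choose 2 + r.choose 3 := Nat.choose_succ_succ r 2
    have h3 : r.choose 1 = r := Nat.choose_one_right r
    omega

/-- **Refined bound via the Bonferroni inequality (condition (3.10)).**
Let `M` be a 0–1 matrix with row supports `S i`, and `k ≤ n`. If
`∑_i C(n - |S_i|, k) - ∑_{i<j} C(n - |S_i ∪ S_j|, k)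
  + ∑_{i<j<l} C(n - |S_i ∪ S_j ∪ S_l|, k) < C(n, k)`,
then there is a set `J` of columns of cardinality `k` covering every row of `M`. -/
theorem stmt_3 {m n : ℕ} (hm : 1 ≤ m) (hn : 1 ≤ n)
    (M : Fin m → Fin n → Bool) (k : ℕ) (hk : k ≤ n)
    (S : Fin m → Finset (Fin n))
    (hS : ∀ i, S i = univ.filter (fun j : Fin n => M i j = true))
    (h : (∑ i : Fin m, ((n - (S i).card).choose k : ℤ))
        - (∑ p ∈ univ.filter (fun p : Fin m × Fin m => p.1 < p.2),
            ((n - (S p.1 ∪ S p.2).card).choose k : ℤ))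
        + (∑ t ∈ univ.filter
            (fun t : Fin m × Fin m × Fin m => t.1 < t.2.1 ∧ t.2.1 < t.2.2),
            ((n - (S t.1 ∪ S t.2.1 ∪ S t.2.2).card).choose k : ℤ))
        < (n.choose k : ℤ)) :
    ∃ J : Finset (Fin n), J.card = k ∧ ∀ i : Fin m, ∃ j ∈ J, M i j = true := by
  classical
  by_contra hcon
  push_neg at hcon
  set 𝒥 := (univ : Finset (Fin n)).powersetCard k with h𝒥
  -- the "bad" rows for a given candidate J
  set B : Finset (Fin n) → Finset (Fin m) :=
    fun J => univ.filter (fun i => J ∩ S i = ∅) with hB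
  -- every J of cardinality k has at least one bad row
  have hbad : ∀ J ∈ 𝒥, 1 ≤ (B J).card := by
    intro J hJ
    rw [Finset.mem_powersetCard] at hJ
    obtain ⟨i, hi⟩ := hcon J hJ.2
    have : i ∈ B J := by
      simp only [hB, Finset.mem_filter, Finset.mem_univ, true_and]
      rw [Finset.eq_empty_iff_forall_notMem]
      intro j hj
      rw [Finset.mem_inter, hS i, Finset.mem_filter] at hj
      exact hi j hj.1 hj.2.2
    exact Finset.card_pos.mpr ⟨i, this⟩
  -- first sum
  have key1 : (∑ i : Fin m, (n - (S i).card).choose k)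
      = ∑ J ∈ 𝒥, (B J).card := by
    calc (∑ i : Fin m, (n - (S i).card).choose k)
        = ∑ i : Fin m, ∑ J ∈ 𝒥, if J ∩ S i = ∅ then 1 else 0 := by
          refine Finset.sum_congr rfl fun i _ => ?_
          rw [← Finset.card_filter, cover_lemA]
      _ = ∑ J ∈ 𝒥, ∑ i : Fin m, if J ∩ S i = ∅ then 1 else 0 := Finset.sum_comm
      _ = ∑ J ∈ 𝒥, (B J).card := by
          refine Finset.sum_congr rfl fun J _ => ?_
          rw [hB, Finset.card_filter]
  -- second sum
  have key2 : (∑ p ∈ univ.filter (fun p : Fin m × Fin m => p.1 < p.2),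
        (n - (S p.1 ∪ S p.2).card).choose k)
      = ∑ J ∈ 𝒥, (B J).card.choose 2 := by
    calc (∑ p ∈ univ.filter (fun p : Fin m × Fin m => p.1 < p.2),
          (n - (S p.1 ∪ S p.2).card).choose k)
        = ∑ p ∈ univ.filter (fun p : Fin m × Fin m => p.1 < p.2),
            ∑ J ∈ 𝒥, if J ∩ (S p.1 ∪ S p.2) = ∅ then 1 else 0 := by
          refine Finset.sum_congr rfl fun p _ => ?_
          rw [← Finset.card_filter, cover_lemA]
      _ = ∑ J ∈ 𝒥, ∑ p ∈ univ.filter (fun p : Fin m × Fin m => p.1 < p.2),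
            if J ∩ (S p.1 ∪ S p.2) = ∅ then 1 else 0 := Finset.sum_comm
      _ = ∑ J ∈ 𝒥, (B J).card.choose 2 := by
          refine Finset.sum_congr rfl fun J _ => ?_
          rw [← Finset.card_filter]
          have heq : (univ.filter (fun p : Fin m × Fin m => p.1 < p.2)).filter
                (fun p => J ∩ (S p.1 ∪ S p.2) = ∅)
              = (B J ×ˢ B J).filter (fun p => p.1 < p.2) := by
            ext ⟨i, j⟩
            simp only [Finset.mem_filter, Finset.mem_univ, true_and, Finset.mem_product,
              Finset.inter_union_distrib_left, Finset.union_eq_empty, hB]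
            tauto
          rw [heq]
          -- pairs count
          rw [← Finset.card_powersetCard 2 (B J)]
          apply Finset.card_bij (fun p _ => ({p.1, p.2} : Finset (Fin m)))
          · rintro ⟨a, b⟩ hp
            simp only [Finset.mem_filter, Finset.mem_product] at hp
            simp only [Finset.mem_powersetCard]
            refine ⟨by simp [Finset.insert_subset_iff, hp.1.1, hp.1.2], ?_⟩
            rw [Finset.card_insert_of_notMem (by simp; omega), Finset.card_singleton]
          · rintro ⟨a, b⟩ ha ⟨c, d⟩ hc hfe
            simp only [Finset.mem_filter, Finset.mem_product] at ha hc
            have h1 := Finset.ext_iff.mp hfe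
            have e1 := (h1 a).mp (by simp)
            have e2 := (h1 b).mp (by simp)
            have e3 := (h1 c).mpr (by simp)
            simp only [Finset.mem_insert, Finset.mem_singleton] at e1 e2 e3
            have := ha.2; have := hc.2
            simp only [Prod.mk.injEq]
            omega
          · intro s hs
            rw [Finset.mem_powersetCard] at hs
            obtain ⟨a, b, hab, rfl⟩ := Finset.card_eq_two.mp hs.2
            rcases lt_or_gt_of_ne hab with h' | h'
            · exact ⟨(a, b), by
                simp only [Finset.mem_filter, Finset.mem_product]
                exact ⟨⟨hs.1 (by simp), hs.1 (by simp)⟩, h'⟩, rfl⟩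
            · exact ⟨(b, a), by
                simp only [Finset.mem_filter, Finset.mem_product]
                exact ⟨⟨hs.1 (by simp), hs.1 (by simp)⟩, h'⟩, by simp [Finset.pair_comm]⟩
  -- third sum
  have key3 : (∑ t ∈ univ.filter
        (fun t : Fin m × Fin m × Fin m => t.1 < t.2.1 ∧ t.2.1 < t.2.2),
        (n - (S t.1 ∪ S t.2.1 ∪ S t.2.2).card).choose k)
      = ∑ J ∈ 𝒥, (B J).card.choose 3 := by
    calc (∑ t ∈ univ.filter
          (fun t : Fin m × Fin m × Fin m => t.1 < t.2.1 ∧ t.2.1 < t.2.2),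
          (n - (S t.1 ∪ S t.2.1 ∪ S t.2.2).card).choose k)
        = ∑ t ∈ univ.filter
            (fun t : Fin m × Fin m × Fin m => t.1 < t.2.1 ∧ t.2.1 < t.2.2),
            ∑ J ∈ 𝒥, if J ∩ (S t.1 ∪ S t.2.1 ∪ S t.2.2) = ∅ then 1 else 0 := by
          refine Finset.sum_congr rfl fun t _ => ?_
          rw [← Finset.card_filter, cover_lemA]
      _ = ∑ J ∈ 𝒥, ∑ t ∈ univ.filter
            (fun t : Fin m × Fin m × Fin m => t.1 < t.2.1 ∧ t.2.1 < t.2.2),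
            if J ∩ (S t.1 ∪ S t.2.1 ∪ S t.2.2) = ∅ then 1 else 0 := Finset.sum_comm
      _ = ∑ J ∈ 𝒥, (B J).card.choose 3 := by
          refine Finset.sum_congr rfl fun J _ => ?_
          rw [← Finset.card_filter]
          have heq : (univ.filter
                (fun t : Fin m × Fin m × Fin m => t.1 < t.2.1 ∧ t.2.1 < t.2.2)).filter
                (fun t => J ∩ (S t.1 ∪ S t.2.1 ∪ S t.2.2) = ∅)
              = (B J ×ˢ B J ×ˢ B J).filter
                (fun t => t.1 < t.2.1 ∧ t.2.1 < t.2.2) := by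
            ext ⟨i, j, l⟩
            simp only [Finset.mem_filter, Finset.mem_univ, true_and, Finset.mem_product,
              Finset.inter_union_distrib_left, Finset.union_eq_empty, hB]
            tauto
          rw [heq]
          -- triples count
          rw [← Finset.card_powersetCard 3 (B J)]
          apply Finset.card_bij (fun t _ => ({t.1, t.2.1, t.2.2} : Finset (Fin m)))
          · rintro ⟨a, b, c⟩ hp
            simp only [Finset.mem_filter, Finset.mem_product] at hp
            obtain ⟨⟨ha, hb, hc⟩, h1, h2⟩ := hp
            simp only [Finset.mem_powersetCard]
            refine ⟨by simp [Finset.insert_subset_iff, ha, hb, hc], ?_⟩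
            rw [Finset.card_insert_of_notMem (by simp; omega),
              Finset.card_insert_of_notMem (by simp; omega), Finset.card_singleton]
          · rintro ⟨a, b, c⟩ ha ⟨d, e, f⟩ hd hfe
            simp only [Finset.mem_filter, Finset.mem_product] at ha hd
            have h1 := Finset.ext_iff.mp hfe
            have e1 := (h1 a).mp (by simp)
            have e2 := (h1 b).mp (by simp)
            have e3 := (h1 c).mp (by simp)
            have e4 := (h1 d).mpr (by simp)
            have e5 := (h1 e).mpr (by simp)
            have e6 := (h1 f).mpr (by simp)
            simp only [Finset.mem_insert, Finset.mem_singleton] at e1 e2 e3 e4 e5 e6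
            obtain ⟨-, u1, u2⟩ := ha; obtain ⟨-, v1, v2⟩ := hd
            simp only [Prod.mk.injEq]
            omega
          · intro s hs
            rw [Finset.mem_powersetCard] at hs
            obtain ⟨a, b, c, hab, hac, hbc, rfl⟩ := Finset.card_eq_three.mp hs.2
            have hmem : ∀ x y z : Fin m, x < y → y < z →
                ({a,b,c} : Finset (Fin m)) = {x,y,z} →
                ∃ t, ∃ _ : t ∈ (B J ×ˢ B J ×ˢ B J).filter
                    (fun t : Fin m × Fin m × Fin m => t.1 < t.2.1 ∧ t.2.1 < t.2.2),
                  ({t.1, t.2.1, t.2.2} : Finset (Fin m)) = {a,b,c} := by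
              intro x y z h1 h2 he
              refine ⟨(x, y, z), ?_, he.symm⟩
              simp only [Finset.mem_filter, Finset.mem_product]
              have hx : x ∈ ({a,b,c} : Finset (Fin m)) := he ▸ (by simp)
              have hy : y ∈ ({a,b,c} : Finset (Fin m)) := he ▸ (by simp)
              have hz : z ∈ ({a,b,c} : Finset (Fin m)) := he ▸ (by simp)
              exact ⟨⟨hs.1 hx, hs.1 hy, hs.1 hz⟩, h1, h2⟩
            rcases lt_trichotomy a b with h1 | h1 | h1
            · rcases lt_trichotomy b c with h3 | h3 | h3
              · exact hmem a b c h1 h3 rfl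
              · exact absurd h3 hbc
              · rcases lt_trichotomy a c with h2 | h2 | h2
                · exact hmem a c b h2 h3 (by ext x; simp; tauto)
                · exact absurd h2 hac
                · exact hmem c a b h2 h1 (by ext x; simp; tauto)
            · exact absurd h1 hab
            · rcases lt_trichotomy a c with h2 | h2 | h2
              · exact hmem b a c h1 h2 (by ext x; simp; tauto)
              · exact absurd h2 hac
              · rcases lt_trichotomy b c with h3 | h3 | h3
                · exact hmem b c a h3 h2 (by ext x; simp; tauto)
                · exact absurd h3 hbc
                · exact hmem c b a h3 h1 (by ext x; simp; tauto)
  -- combine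
  have hcard𝒥 : 𝒥.card = n.choose k := by
    rw [h𝒥, Finset.card_powersetCard, Finset.card_univ, Fintype.card_fin]
  have hlow : (𝒥.card : ℤ) ≤ ∑ J ∈ 𝒥, (((B J).card : ℤ)
      - ((B J).card.choose 2 : ℤ) + ((B J).card.choose 3 : ℤ)) := by
    calc (𝒥.card : ℤ) = ∑ J ∈ 𝒥, (1 : ℤ) := by simp
      _ ≤ _ := by
        refine Finset.sum_le_sum fun J hJ => ?_
        have := cover_bonf (B J).card (hbad J hJ)
        have h2 : ((B J).card.choose 2 : ℤ) + 1 ≤ ((B J).card : ℤ)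
            + ((B J).card.choose 3 : ℤ) := by exact_mod_cast this
        linarith
  rw [Finset.sum_add_distrib, Finset.sum_sub_distrib] at hlow
  rw [show (∑ i : Fin m, ((n - (S i).card).choose k : ℤ))
      = ((∑ i : Fin m, (n - (S i).card).choose k : ℕ) : ℤ) by push_cast; ring,
    key1] at h
  rw [show (∑ p ∈ univ.filter (fun p : Fin m × Fin m => p.1 < p.2),
        ((n - (S p.1 ∪ S p.2).card).choose k : ℤ))
      = ((∑ p ∈ univ.filter (fun p : Fin m × Fin m => p.1 < p.2),
        (n - (S p.1 ∪ S p.2).card).choose k : ℕ) : ℤ) by push_cast; ring,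
    key2] at h
  rw [show (∑ t ∈ univ.filter
        (fun t : Fin m × Fin m × Fin m => t.1 < t.2.1 ∧ t.2.1 < t.2.2),
        ((n - (S t.1 ∪ S t.2.1 ∪ S t.2.2).card).choose k : ℤ))
      = ((∑ t ∈ univ.filter
        (fun t : Fin m × Fin m × Fin m => t.1 < t.2.1 ∧ t.2.1 < t.2.2),
        (n - (S t.1 ∪ S t.2.1 ∪ S t.2.2).card).choose k : ℕ) : ℤ) by push_cast; ring,
    key3] at h
  rw [← hcard𝒥] at h
  push_cast at h hlow
  linarith
end

section
/- (Theorem 4.2, counting form via condition (4.4)) Let M be a 0–1 matrix whose rows are split into a top group of m₁ rows and a bottom group of m₂ rows, and whose columns are split into a left group of n₁ columns and a right group of n₂ columns (m₁, m₂, n₁, n₂ ≥ 1). Suppose δ₁, δ₂, δ₃, δ₄ ∈ [0, 1) are such that every top row has density at least δ₁ in the left columns and at least δ₂ in the right columns, and every bottom row has density at least δ₃ in the left columns and at least δ₄ in the right columns. If k₁ ≤ n₁ and k₂ ≤ n₂ are natural numbers with m₁·(1−δ₁)^{k₁}·(1−δ₂)^{k₂} + m₂·(1−δ₃)^{k₁}·(1−δ₄)^{k₂}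 < 1, then there exist a set J₁ of left columns with |J₁| = k₁ and a set J₂ of right columns with |J₂| = k₂ such that J₁ ∪ J₂ covers every row of M. -/
/-!
A pair `(J₁, J₂)` misses row `i` exactly when `J₁` and `J₂` lie inside the zero sets of that
row, so row `i` is missed by `C(z₁, k₁) · C(z₂, k₂)` pairs, where `z₁, z₂` are its numbers of
zeros among the left and right columns. Since `C(z, k) / C(n, k) ≤ (z / n) ^ k` and the density
bounds give `z ≤ n (1 - δ)`, summing over the rows shows that fewer than
`C(n₁, k₁) · C(n₂, k₂)` pairs miss some row; as there are that many pairs, one misses no row.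
-/

open Finset

theorem Nat.choose_mul_pow_le_choose_mul_pow {a n : ℕ} (h : a ≤ n) (k : ℕ) :
    a.choose k * n ^ k ≤ n.choose k * a ^ k := by
  induction k with
  | zero => simp
  | succ k ih =>
    refine Nat.le_of_mul_le_mul_right ?_ k.succ_pos
    have step : (a - k) * n ≤ (n - k) * a := by
      rcases le_total a k with hak | hka
      · simp [Nat.sub_eq_zero_of_le hak]
      · obtain ⟨d, rfl⟩ := Nat.exists_eq_add_of_le hka
        obtain ⟨e, rfl⟩ := Nat.exists_eq_add_of_le h
        rw [Nat.add_sub_cancel_left, add_assoc, Nat.add_sub_cancel_left]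
        nlinarith
    calc a.choose (k + 1) * n ^ (k + 1) * (k + 1)
        = a.choose k * n ^ k * ((a - k) * n) := by
          rw [mul_right_comm, Nat.choose_succ_right_eq]; ring
      _ ≤ n.choose k * a ^ k * ((n - k) * a) := Nat.mul_le_mul ih step
      _ = n.choose (k + 1) * a ^ (k + 1) * (k + 1) := by
          rw [mul_right_comm _ _ (k + 1), Nat.choose_succ_right_eq]; ring

theorem Nat.choose_le_choose_mul_pow_of_le_mul {z n : ℕ} {x : ℝ} (hn : 0 < n) (hzn : z ≤ n)
    (hzx : (z : ℝ) ≤ n * x) (k : ℕ) :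
    (z.choose k : ℝ) ≤ n.choose k * x ^ k := by
  refine le_of_mul_le_mul_right ?_ (pow_pos (Nat.cast_pos.mpr hn) k)
  calc (z.choose k : ℝ) * n ^ k ≤ n.choose k * z ^ k := by
        exact_mod_cast Nat.choose_mul_pow_le_choose_mul_pow hzn k
    _ ≤ n.choose k * (n * x) ^ k := by gcongr
    _ = n.choose k * x ^ k * n ^ k := by ring

theorem choose_card_filter_eq_false_le {n : ℕ} (f : Fin n → Bool) {δ : ℝ}
    (hf : δ ≤ (#{j | f j = true} : ℝ) / n) (k : ℕ) :
    ((#{j | f j = false}).choose k : ℝ) ≤ n.choose k * (1 - δ) ^ k := by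
  rcases Nat.eq_zero_or_pos n with rfl | hn
  · cases k <;> simp
  have hsplit : #{j | f j = true} + #{j | f j = false} = n := by
    simpa using card_filter_add_card_filter_not (s := univ) (p := fun j => f j = true)
  have hzeros : (#{j | f j = false} : ℝ) ≤ n * (1 - δ) := by
    rw [le_div_iff₀ (by exact_mod_cast hn)] at hf
    have : (#{j | f j = true} : ℝ) + #{j | f j = false} = n := by exact_mod_cast hsplit
    linarith
  exact Nat.choose_le_choose_mul_pow_of_le_mul hn (by omega) hzeros k

theorem choose_mul_choose_card_filter_eq_false_le {n₁ n₂ : ℕ} (r : Fin n₁ ⊕ Fin n₂ → Bool)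
    {δ δ' : ℝ} (hr₁ : δ ≤ (#{j | r (.inl j) = true} : ℝ) / n₁)
    (hr₂ : δ' ≤ (#{j | r (.inr j) = true} : ℝ) / n₂) (k k' : ℕ) :
    ((#{j | r (.inl j) = false}).choose k * (#{j | r (.inr j) = false}).choose k' : ℝ) ≤
      n₁.choose k * n₂.choose k' * ((1 - δ) ^ k * (1 - δ') ^ k') := by
  have h₁ := choose_card_filter_eq_false_le (fun j => r (.inl j)) hr₁ k
  have h₂ := choose_card_filter_eq_false_le (fun j => r (.inr j)) hr₂ k'
  calc _ ≤ (n₁.choose k * (1 - δ) ^ k) * (n₂.choose k' * (1 - δ') ^ k') :=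
        mul_le_mul_of_nonneg h₁ h₂ (by positivity) ((Nat.cast_nonneg _).trans h₂)
    _ = _ := by ring

theorem exists_cover_of_sum_choose_lt {ι α β : Type*} [Fintype ι] [Fintype α] [Fintype β]
    (M : ι → α ⊕ β → Bool) (k₁ k₂ : ℕ)
    (h : ∑ i, (#{j | M i (.inl j) = false}).choose k₁ * (#{j | M i (.inr j) = false}).choose k₂
      < (Fintype.card α).choose k₁ * (Fintype.card β).choose k₂) :
    ∃ J₁ : Finset α, ∃ J₂ : Finset β, #J₁ = k₁ ∧ #J₂ = k₂ ∧
      ∀ i, (∃ j ∈ J₁, M i (.inl j) = true) ∨ (∃ j ∈ J₂, M i (.inr j) = true) := by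
  classical
  by_contra! hmiss
  let missing (i : ι) : Finset (Finset α × Finset β) :=
    powersetCard k₁ {j | M i (.inl j) = false} ×ˢ powersetCard k₂ {j | M i (.inr j) = false}
  have hcover : powersetCard k₁ univ ×ˢ powersetCard k₂ univ ⊆ univ.biUnion missing := by
    rintro ⟨J₁, J₂⟩ hJ
    simp only [mem_product, mem_powersetCard_univ] at hJ
    obtain ⟨i, hi₁, hi₂⟩ := hmiss J₁ J₂ hJ.1 hJ.2
    simp only [missing, mem_biUnion, mem_univ, true_and, mem_product, mem_powersetCard]
    exact ⟨i, ⟨fun j hj => by simpa using hi₁ j hj, hJ.1⟩,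
      fun j hj => by simpa using hi₂ j hj, hJ.2⟩
  refine h.not_ge ?_
  calc (Fintype.card α).choose k₁ * (Fintype.card β).choose k₂
      = #(powersetCard k₁ univ ×ˢ powersetCard k₂ univ) := by
        simp only [card_product, card_powersetCard, card_univ]
    _ ≤ #(univ.biUnion missing) := card_le_card hcover
    _ ≤ ∑ i, #(missing i) := card_biUnion_le
    _ = _ := by simp only [missing, card_product, card_powersetCard]

theorem stmt_5_general {m₁ m₂ n₁ n₂ : ℕ}
    (M : Fin m₁ ⊕ Fin m₂ → Fin n₁ ⊕ Fin n₂ → Bool)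
    (δ₁ δ₂ δ₃ δ₄ : ℝ)
    (htop₁ : ∀ i : Fin m₁,
      δ₁ ≤ ((univ.filter (fun j : Fin n₁ => M (Sum.inl i) (Sum.inl j) = true)).card : ℝ) / (n₁ : ℝ))
    (htop₂ : ∀ i : Fin m₁,
      δ₂ ≤ ((univ.filter (fun j : Fin n₂ => M (Sum.inl i) (Sum.inr j) = true)).card : ℝ) / (n₂ : ℝ))
    (hbot₁ : ∀ i : Fin m₂,
      δ₃ ≤ ((univ.filter (fun j : Fin n₁ => M (Sum.inr i) (Sum.inl j) = true)).card : ℝ) / (n₁ : ℝ))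
    (hbot₂ : ∀ i : Fin m₂,
      δ₄ ≤ ((univ.filter (fun j : Fin n₂ => M (Sum.inr i) (Sum.inr j) = true)).card : ℝ) / (n₂ : ℝ))
    (k₁ k₂ : ℕ) (hk₁ : k₁ ≤ n₁) (hk₂ : k₂ ≤ n₂)
    (hcond : (m₁ : ℝ) * (1 - δ₁) ^ k₁ * (1 - δ₂) ^ k₂
        + (m₂ : ℝ) * (1 - δ₃) ^ k₁ * (1 - δ₄) ^ k₂ < 1) :
    ∃ J₁ : Finset (Fin n₁), ∃ J₂ : Finset (Fin n₂),
      J₁.card = k₁ ∧ J₂.card = k₂ ∧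
      ∀ i : Fin m₁ ⊕ Fin m₂,
        (∃ j ∈ J₁, M i (Sum.inl j) = true) ∨ (∃ j ∈ J₂, M i (Sum.inr j) = true) := by
  refine exists_cover_of_sum_choose_lt M k₁ k₂ ?_
  simp only [Fintype.card_fin]
  have hC : (0 : ℝ) < n₁.choose k₁ * n₂.choose k₂ := by
    have := Nat.choose_pos hk₁; have := Nat.choose_pos hk₂; positivity
  rw [← Nat.cast_lt (α := ℝ)]
  push_cast
  calc _ = _ := Fintype.sum_sum_type _
    _ ≤ ∑ _t : Fin m₁, n₁.choose k₁ * n₂.choose k₂ * ((1 - δ₁) ^ k₁ * (1 - δ₂) ^ k₂)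
        + ∑ _t : Fin m₂, n₁.choose k₁ * n₂.choose k₂ * ((1 - δ₃) ^ k₁ * (1 - δ₄) ^ k₂) :=
      add_le_add
        (sum_le_sum fun t _ => choose_mul_choose_card_filter_eq_false_le _ (htop₁ t) (htop₂ t) _ _)
        (sum_le_sum fun t _ => choose_mul_choose_card_filter_eq_false_le _ (hbot₁ t) (hbot₂ t) _ _)
    _ = n₁.choose k₁ * n₂.choose k₂ * ((m₁ : ℝ) * (1 - δ₁) ^ k₁ * (1 - δ₂) ^ k₂
        + (m₂ : ℝ) * (1 - δ₃) ^ k₁ * (1 - δ₄) ^ k₂) := by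
      simp only [sum_const, card_univ, Fintype.card_fin, nsmul_eq_mul]; ring
    _ < n₁.choose k₁ * n₂.choose k₂ := mul_lt_of_lt_one_right hC hcond

/-- **Theorem 4.2 (counting form, condition (4.4)).** Let `M` be a 0–1 matrix with rows
split into a top group of `m₁` rows and a bottom group of `m₂` rows, and columns split
into a left group of `n₁` columns and a right group of `n₂` columns. If every top row has
density at least `δ₁` in the left columns and at least `δ₂` in the right columns, every
bottom row has density at least `δ₃` in the left columns and at least `δ₄` in the right
columns, and `k₁ ≤ n₁`, `k₂ ≤ n₂` satisfy
`m₁ (1-δ₁)^{k₁} (1-δ₂)^{k₂} + m₂ (1-δ₃)^{k₁} (1-δ₄)^{k₂} < 1`, then there are `J₁`, `J₂`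
of left resp. right columns with `|J₁| = k₁`, `|J₂| = k₂` covering every row of `M`. -/
theorem stmt_5 {m₁ m₂ n₁ n₂ : ℕ}
    (hm₁ : 1 ≤ m₁) (hm₂ : 1 ≤ m₂) (hn₁ : 1 ≤ n₁) (hn₂ : 1 ≤ n₂)
    (M : Fin m₁ ⊕ Fin m₂ → Fin n₁ ⊕ Fin n₂ → Bool)
    (δ₁ δ₂ δ₃ δ₄ : ℝ)
    (hδ₁ : 0 ≤ δ₁ ∧ δ₁ < 1) (hδ₂ : 0 ≤ δ₂ ∧ δ₂ < 1)
    (hδ₃ : 0 ≤ δ₃ ∧ δ₃ < 1) (hδ₄ : 0 ≤ δ₄ ∧ δ₄ < 1)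
    (htop₁ : ∀ i : Fin m₁,
      δ₁ ≤ ((univ.filter (fun j : Fin n₁ => M (Sum.inl i) (Sum.inl j) = true)).card : ℝ) / (n₁ : ℝ))
    (htop₂ : ∀ i : Fin m₁,
      δ₂ ≤ ((univ.filter (fun j : Fin n₂ => M (Sum.inl i) (Sum.inr j) = true)).card : ℝ) / (n₂ : ℝ))
    (hbot₁ : ∀ i : Fin m₂,
      δ₃ ≤ ((univ.filter (fun j : Fin n₁ => M (Sum.inr i) (Sum.inl j) = true)).card : ℝ) / (n₁ : ℝ))
    (hbot₂ : ∀ i : Fin m₂,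
      δ₄ ≤ ((univ.filter (fun j : Fin n₂ => M (Sum.inr i) (Sum.inr j) = true)).card : ℝ) / (n₂ : ℝ))
    (k₁ k₂ : ℕ) (hk₁ : k₁ ≤ n₁) (hk₂ : k₂ ≤ n₂)
    (hcond : (m₁ : ℝ) * (1 - δ₁) ^ k₁ * (1 - δ₂) ^ k₂
        + (m₂ : ℝ) * (1 - δ₃) ^ k₁ * (1 - δ₄) ^ k₂ < 1) :
    ∃ J₁ : Finset (Fin n₁), ∃ J₂ : Finset (Fin n₂),
      J₁.card = k₁ ∧ J₂.card = k₂ ∧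
      ∀ i : Fin m₁ ⊕ Fin m₂,
        (∃ j ∈ J₁, M i (Sum.inl j) = true) ∨ (∃ j ∈ J₂, M i (Sum.inr j) = true) :=
  stmt_5_general M δ₁ δ₂ δ₃ δ₄ htop₁ htop₂ hbot₁ hbot₂ k₁ k₂ hk₁ hk₂ hcond
end

section
/- (Theorem 4.2, logarithmic form via conditions (4.7)–(4.8)) Let M be a 0–1 matrix with rows split into a top group of m₁ rows and a bottom group of m₂ rows, and columns split into a left group of n₁ columns and a right group of n₂ columns (m₁, m₂, n₁, n₂ ≥ 1). Suppose δ₁, δ₂, δ₃, δ₄ ∈ [0, 1) are such that every top row has density at least δ₁ in the left columns and at least δ₂ in the right columns, and every bottom row has density at least δ₃ in the left columns and at least δ₄ in the right columns. Let α ∈ (0, 1), and let k₁ ≤ n₁ and k₂ ≤ n₂ be natural numbers satisfying k₁·|log(1−δ₁)| + k₂·|log(1−δ₂)| > |log α| + log m₁ and k₁·|log(1−δ₃)| + k₂·|log(1−δ₄)| > |log(1−α)| + log m₂. Then there exist a set J₁ of left columns with |J₁| = k₁ and a set J₂ of right columns with |J₂| = k₂ such that J₁ ∪ J₂ covers every row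 of M. -/
open Finset

lemma nat_key (n a i : ℕ) (h : a ≤ n) : n * (a - i) ≤ a * (n - i) := by
  rcases le_or_gt a i with h1 | h1
  · simp [Nat.sub_eq_zero_of_le h1]
  · rw [Nat.mul_sub, Nat.mul_sub]
    calc n * a - n * i ≤ n * a - a * i :=
          Nat.sub_le_sub_left (Nat.mul_le_mul_right i h) _
      _ = a * n - a * i := by rw [Nat.mul_comm]

lemma nat_desc (n d k : ℕ) :
    n ^ k * (n - d).descFactorial k ≤ (n - d) ^ k * n.descFactorial k := by
  rw [Nat.descFactorial_eq_prod_range, Nat.descFactorial_eq_prod_range]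
  have h1 : n ^ k * ∏ i ∈ range k, (n - d - i) = ∏ i ∈ range k, n * (n - d - i) := by
    rw [Finset.prod_mul_distrib, Finset.prod_const, card_range]
  have h2 : (n - d) ^ k * ∏ i ∈ range k, (n - i) = ∏ i ∈ range k, (n - d) * (n - i) := by
    rw [Finset.prod_mul_distrib, Finset.prod_const, card_range]
  rw [h1, h2]
  exact Finset.prod_le_prod' fun i _ => nat_key n (n - d) i (Nat.sub_le n d)

lemma choose_bound (n d k : ℕ) (hn : 0 < n) (hd : d ≤ n) (δ : ℝ)
    (hδd : δ * n ≤ d) :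
    ((n - d).choose k : ℝ) ≤ (1 - δ) ^ k * n.choose k := by
  have hnpos : (0 : ℝ) < n := by exact_mod_cast hn
  have hdr : (d : ℝ) ≤ n := by exact_mod_cast hd
  have hcast : ((n - d : ℕ) : ℝ) = (n : ℝ) - d := by
    rw [Nat.cast_sub hd]
  have hratio : ((n : ℝ) - d) / n ≤ 1 - δ := by
    rw [div_le_iff₀ hnpos]; nlinarith
  have hr0 : 0 ≤ ((n : ℝ) - d) / n := div_nonneg (by linarith) (le_of_lt hnpos)
  have hnat2 : n ^ k * (n - d).choose k ≤ (n - d) ^ k * n.choose k := by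
    have h := nat_desc n d k
    rw [Nat.descFactorial_eq_factorial_mul_choose, Nat.descFactorial_eq_factorial_mul_choose] at h
    refine Nat.le_of_mul_le_mul_left ?_ (Nat.factorial_pos k)
    calc Nat.factorial k * (n ^ k * (n - d).choose k)
        = n ^ k * (Nat.factorial k * (n - d).choose k) := by ring
      _ ≤ (n - d) ^ k * (Nat.factorial k * n.choose k) := h
      _ = Nat.factorial k * ((n - d) ^ k * n.choose k) := by ring
  have hreal : ((n - d).choose k : ℝ) ≤ (((n : ℝ) - d) / n) ^ k * n.choose k := by
    rw [div_pow, div_mul_eq_mul_div, le_div_iff₀ (pow_pos hnpos k)]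
    calc ((n - d).choose k : ℝ) * (n : ℝ) ^ k = (n : ℝ) ^ k * ((n - d).choose k : ℝ) := by ring
      _ ≤ ((n : ℝ) - d) ^ k * (n.choose k : ℝ) := by
          rw [← hcast]; exact_mod_cast hnat2
  refine hreal.trans (mul_le_mul_of_nonneg_right (pow_le_pow_left₀ hr0 hratio k) ?_)
  exact Nat.cast_nonneg _


set_option maxHeartbeats 1000000 in
/-- **Theorem 4.2 (logarithmic form, conditions (4.7)–(4.8)).** With notation as in the
counting form, if `α ∈ (0,1)` and `k₁ ≤ n₁`, `k₂ ≤ n₂` satisfy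
`k₁ |log(1-δ₁)| + k₂ |log(1-δ₂)| > |log α| + log m₁` and
`k₁ |log(1-δ₃)| + k₂ |log(1-δ₄)| > |log(1-α)| + log m₂`, then there are `J₁`, `J₂` of
left resp. right columns with `|J₁| = k₁`, `|J₂| = k₂` covering every row of `M`. -/
theorem stmt_6 {m₁ m₂ n₁ n₂ : ℕ}
    (hm₁ : 1 ≤ m₁) (hm₂ : 1 ≤ m₂) (hn₁ : 1 ≤ n₁) (hn₂ : 1 ≤ n₂)
    (M : Fin m₁ ⊕ Fin m₂ → Fin n₁ ⊕ Fin n₂ → Bool)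
    (δ₁ δ₂ δ₃ δ₄ : ℝ)
    (hδ₁ : 0 ≤ δ₁ ∧ δ₁ < 1) (hδ₂ : 0 ≤ δ₂ ∧ δ₂ < 1)
    (hδ₃ : 0 ≤ δ₃ ∧ δ₃ < 1) (hδ₄ : 0 ≤ δ₄ ∧ δ₄ < 1)
    (htop₁ : ∀ i : Fin m₁,
      δ₁ ≤ ((univ.filter (fun j : Fin n₁ => M (Sum.inl i) (Sum.inl j) = true)).card : ℝ) / (n₁ : ℝ))
    (htop₂ : ∀ i : Fin m₁,
      δ₂ ≤ ((univ.filter (fun j : Fin n₂ => M (Sum.inl i) (Sum.inr j) = true)).card : ℝ) / (n₂ : ℝ))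
    (hbot₁ : ∀ i : Fin m₂,
      δ₃ ≤ ((univ.filter (fun j : Fin n₁ => M (Sum.inr i) (Sum.inl j) = true)).card : ℝ) / (n₁ : ℝ))
    (hbot₂ : ∀ i : Fin m₂,
      δ₄ ≤ ((univ.filter (fun j : Fin n₂ => M (Sum.inr i) (Sum.inr j) = true)).card : ℝ) / (n₂ : ℝ))
    (α : ℝ) (hα : α ∈ Set.Ioo (0 : ℝ) 1)
    (k₁ k₂ : ℕ) (hk₁ : k₁ ≤ n₁) (hk₂ : k₂ ≤ n₂)
    (hcond₁ : (k₁ : ℝ) * (-Real.log (1 - δ₁)) + (k₂ : ℝ) * (-Real.log (1 - δ₂))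
        > -Real.log α + Real.log m₁)
    (hcond₂ : (k₁ : ℝ) * (-Real.log (1 - δ₃)) + (k₂ : ℝ) * (-Real.log (1 - δ₄))
        > -Real.log (1 - α) + Real.log m₂) :
    ∃ J₁ : Finset (Fin n₁), ∃ J₂ : Finset (Fin n₂),
      J₁.card = k₁ ∧ J₂.card = k₂ ∧
      ∀ i : Fin m₁ ⊕ Fin m₂,
        (∃ j ∈ J₁, M i (Sum.inl j) = true) ∨ (∃ j ∈ J₂, M i (Sum.inr j) = true) := by
  classical
  set S₁ : (Fin m₁ ⊕ Fin m₂) → Finset (Fin n₁) :=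
    fun i => univ.filter (fun j => M i (Sum.inl j) = true) with hS₁
  set S₂ : (Fin m₁ ⊕ Fin m₂) → Finset (Fin n₂) :=
    fun i => univ.filter (fun j => M i (Sum.inr j) = true) with hS₂
  set P : Finset (Finset (Fin n₁) × Finset (Fin n₂)) :=
    (univ.powersetCard k₁) ×ˢ (univ.powersetCard k₂) with hP
  set Bad : (Fin m₁ ⊕ Fin m₂) → Finset (Finset (Fin n₁) × Finset (Fin n₂)) :=
    fun i => P.filter (fun p =>
      ¬((∃ j ∈ p.1, M i (Sum.inl j) = true) ∨ (∃ j ∈ p.2, M i (Sum.inr j) = true))) with hBad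
  have hn₁pos : (0 : ℝ) < n₁ := by exact_mod_cast hn₁
  have hn₂pos : (0 : ℝ) < n₂ := by exact_mod_cast hn₂
  -- card of Bad i
  have hbadcard : ∀ i, (Bad i).card =
      ((n₁ - (S₁ i).card).choose k₁) * ((n₂ - (S₂ i).card).choose k₂) := by
    intro i
    have heq : Bad i = ((S₁ i)ᶜ.powersetCard k₁) ×ˢ ((S₂ i)ᶜ.powersetCard k₂) := by
      ext p
      rw [hBad, Finset.mem_filter, hP, Finset.mem_product, Finset.mem_powersetCard_univ,
        Finset.mem_powersetCard_univ, Finset.mem_product, Finset.mem_powersetCard,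
        Finset.mem_powersetCard]
      constructor
      · rintro ⟨⟨hc1, hc2⟩, h⟩
        push_neg at h
        refine ⟨⟨Finset.subset_iff.mpr fun x hx => Finset.mem_compl.mpr ?_, hc1⟩,
          ⟨Finset.subset_iff.mpr fun x hx => Finset.mem_compl.mpr ?_, hc2⟩⟩
        · simp only [hS₁, Finset.mem_filter, Finset.mem_univ, true_and]
          exact h.1 _ hx
        · simp only [hS₂, Finset.mem_filter, Finset.mem_univ, true_and]
          exact h.2 _ hx
      · rintro ⟨⟨hs1, hc1⟩, ⟨hs2, hc2⟩⟩
        refine ⟨⟨hc1, hc2⟩, ?_⟩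
        push_neg
        constructor
        · intro j hj
          have := Finset.mem_compl.mp (hs1 hj)
          simpa [hS₁] using this
        · intro j hj
          have := Finset.mem_compl.mp (hs2 hj)
          simpa [hS₂] using this
    rw [heq, card_product, Finset.card_powersetCard, Finset.card_powersetCard,
      card_compl, card_compl, Fintype.card_fin, Fintype.card_fin]
  have hd₁le : ∀ i, (S₁ i).card ≤ n₁ := fun i => by
    simpa using card_le_card (subset_univ (S₁ i))
  have hd₂le : ∀ i, (S₂ i).card ≤ n₂ := fun i => by
    simpa using card_le_card (subset_univ (S₂ i))
  set C : ℝ := (n₁.choose k₁ : ℝ) * (n₂.choose k₂ : ℝ) with hC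
  have hCpos : 0 < C := by
    apply mul_pos <;> exact_mod_cast Nat.choose_pos (by assumption)
  -- per-row real bounds
  have hrow : ∀ (i : Fin m₁ ⊕ Fin m₂) (δa δb : ℝ), 0 ≤ δa → 0 ≤ δb →
      δa * n₁ ≤ (S₁ i).card → δb * n₂ ≤ (S₂ i).card →
      ((Bad i).card : ℝ) ≤ (1 - δa) ^ k₁ * (1 - δb) ^ k₂ * C := by
    intro i δa δb ha hb ha' hb'
    rw [hbadcard i]
    push_cast
    have h1 := choose_bound n₁ (S₁ i).card k₁ hn₁ (hd₁le i) δa ha'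
    have h2 := choose_bound n₂ (S₂ i).card k₂ hn₂ (hd₂le i) δb hb'
    have e1 : 0 ≤ (1 - δa) ^ k₁ * (n₁.choose k₁ : ℝ) := by
      have h' : δa * n₁ ≤ n₁ := le_trans ha' (by exact_mod_cast hd₁le i)
      have h'' : δa ≤ 1 := by nlinarith
      exact mul_nonneg (pow_nonneg (by linarith) _) (Nat.cast_nonneg _)
    calc (((n₁ - (S₁ i).card).choose k₁ : ℕ) : ℝ) * (((n₂ - (S₂ i).card).choose k₂ : ℕ) : ℝ)
        ≤ ((1 - δa) ^ k₁ * n₁.choose k₁) * ((1 - δb) ^ k₂ * n₂.choose k₂) :=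
          mul_le_mul h1 h2 (Nat.cast_nonneg _) e1
      _ = (1 - δa) ^ k₁ * (1 - δb) ^ k₂ * C := by rw [hC]; ring
  -- density hypotheses in product form
  have hmul : ∀ (δ : ℝ) (d n : ℕ), 0 < (n : ℝ) → δ ≤ (d : ℝ) / n → δ * n ≤ d := by
    intro δ d n hn h
    rw [le_div_iff₀ hn] at h; exact h
  -- exponential bounds
  have hαpos := hα.1
  have hα1 : α < 1 := hα.2
  have hm₁pos : (0 : ℝ) < m₁ := by exact_mod_cast hm₁
  have hm₂pos : (0 : ℝ) < m₂ := by exact_mod_cast hm₂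
  have hexp : ∀ (δa δb β : ℝ) (m : ℕ), 0 < (m : ℝ) → 0 < β → δa < 1 → δb < 1 →
      (k₁ : ℝ) * (-Real.log (1 - δa)) + (k₂ : ℝ) * (-Real.log (1 - δb))
        > -Real.log β + Real.log m →
      (1 - δa) ^ k₁ * (1 - δb) ^ k₂ * m < β := by
    intro δa δb β m hm hβ h1 h2 hcond
    have p1 : (0 : ℝ) < 1 - δa := by linarith
    have p2 : (0 : ℝ) < 1 - δb := by linarith
    have hlog : Real.log ((1 - δa) ^ k₁ * (1 - δb) ^ k₂ * m) < Real.log β := by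
      rw [Real.log_mul (by positivity) (ne_of_gt hm),
        Real.log_mul (by positivity) (by positivity),
        Real.log_pow, Real.log_pow]
      push_cast
      linarith
    have := Real.exp_lt_exp.mpr hlog
    rwa [Real.exp_log (by positivity), Real.exp_log hβ] at this
  have hb₁ : (1 - δ₁) ^ k₁ * (1 - δ₂) ^ k₂ * (m₁ : ℝ) < α :=
    hexp δ₁ δ₂ α m₁ hm₁pos hαpos hδ₁.2 hδ₂.2 hcond₁
  have hb₂ : (1 - δ₃) ^ k₁ * (1 - δ₄) ^ k₂ * (m₂ : ℝ) < 1 - α :=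
    hexp δ₃ δ₄ (1 - α) m₂ hm₂pos (by linarith) hδ₃.2 hδ₄.2 hcond₂
  -- total sum bound
  have htotal : (∑ i : Fin m₁ ⊕ Fin m₂, ((Bad i).card : ℝ)) < C := by
    rw [Fintype.sum_sum_type]
    have htopsum : ∑ i : Fin m₁, ((Bad (Sum.inl i)).card : ℝ)
        ≤ (m₁ : ℝ) * ((1 - δ₁) ^ k₁ * (1 - δ₂) ^ k₂ * C) := by
      calc ∑ i : Fin m₁, ((Bad (Sum.inl i)).card : ℝ)
          ≤ ∑ _i : Fin m₁, (1 - δ₁) ^ k₁ * (1 - δ₂) ^ k₂ * C := by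
            apply Finset.sum_le_sum
            intro i _
            exact hrow (Sum.inl i) δ₁ δ₂ hδ₁.1 hδ₂.1
              (hmul δ₁ _ n₁ hn₁pos (htop₁ i)) (hmul δ₂ _ n₂ hn₂pos (htop₂ i))
        _ = (m₁ : ℝ) * ((1 - δ₁) ^ k₁ * (1 - δ₂) ^ k₂ * C) := by
            rw [Finset.sum_const, card_univ, Fintype.card_fin, nsmul_eq_mul]
    have hbotsum : ∑ i : Fin m₂, ((Bad (Sum.inr i)).card : ℝ)
        ≤ (m₂ : ℝ) * ((1 - δ₃) ^ k₁ * (1 - δ₄) ^ k₂ * C) := by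
      calc ∑ i : Fin m₂, ((Bad (Sum.inr i)).card : ℝ)
          ≤ ∑ _i : Fin m₂, (1 - δ₃) ^ k₁ * (1 - δ₄) ^ k₂ * C := by
            apply Finset.sum_le_sum
            intro i _
            exact hrow (Sum.inr i) δ₃ δ₄ hδ₃.1 hδ₄.1
              (hmul δ₃ _ n₁ hn₁pos (hbot₁ i)) (hmul δ₄ _ n₂ hn₂pos (hbot₂ i))
        _ = (m₂ : ℝ) * ((1 - δ₃) ^ k₁ * (1 - δ₄) ^ k₂ * C) := by
            rw [Finset.sum_const, card_univ, Fintype.card_fin, nsmul_eq_mul]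
    have h1 : (m₁ : ℝ) * ((1 - δ₁) ^ k₁ * (1 - δ₂) ^ k₂ * C) < α * C := by
      have := mul_lt_mul_of_pos_right hb₁ hCpos
      nlinarith
    have h2 : (m₂ : ℝ) * ((1 - δ₃) ^ k₁ * (1 - δ₄) ^ k₂ * C) < (1 - α) * C := by
      have := mul_lt_mul_of_pos_right hb₂ hCpos
      nlinarith
    nlinarith
  -- extraction
  by_contra hcon
  push_neg at hcon
  have hsub : P ⊆ univ.biUnion Bad := by
    intro p hp
    rw [Finset.mem_biUnion]
    rw [hP, Finset.mem_product, Finset.mem_powersetCard_univ,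
      Finset.mem_powersetCard_univ] at hp
    obtain ⟨i, hi⟩ := hcon p.1 p.2 hp.1 hp.2
    refine ⟨i, mem_univ _, ?_⟩
    rw [hBad]
    simp only [Finset.mem_filter]
    refine ⟨?_, ?_⟩
    · rw [hP, Finset.mem_product, Finset.mem_powersetCard_univ,
        Finset.mem_powersetCard_univ]
      exact hp
    · push_neg
      exact hi
  have hcard : P.card ≤ ∑ i : Fin m₁ ⊕ Fin m₂, (Bad i).card :=
    le_trans (card_le_card hsub) (Finset.card_biUnion_le)
  have hPcard : (P.card : ℝ) = C := by
    rw [hP, card_product, Finset.card_powersetCard, Finset.card_powersetCard,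
      card_univ, card_univ, Fintype.card_fin, Fintype.card_fin, hC]
    push_cast; ring
  have : C ≤ ∑ i : Fin m₁ ⊕ Fin m₂, ((Bad i).card : ℝ) := by
    rw [← hPcard]
    exact_mod_cast hcard
  linarith
end

section
/- (Example 1, inequality (4.16)) Let δ ∈ (0, 1/2) and ν ∈ (−1+2δ, 1−2δ). Then 1/|log(1−δ)| > 1/|log(1 − 2δ/(1+ν))| + 1/|log(1 − 2δ/(1−ν))|. -/
/-!
With `f x = 1 / -log (1 - x)` one has `1/x - 1 < f x < 1/x - 1/2` on `(0, 1)`, the upper bound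
coming from the Padé-type estimate `2t/(t + 2) < log (1 + t)` at `t = x/(1 - x)`. Hence
`f a + f b < 1/a + 1/b - 1 < f c` whenever `1/a + 1/b = 1/c`, and the reciprocals of
`2δ/(1 + ν)` and `2δ/(1 - ν)` add up to `1/δ`.
-/

namespace Real

variable {x : ℝ}

lemma neg_log_one_sub_eq_log_one_add_div (hx : x < 1) :
    -log (1 - x) = log (1 + x / (1 - x)) := by
  have h : 1 - x ≠ 0 := by linarith
  rw [← log_inv]
  congr 1
  field_simp
  ring

lemma two_mul_div_two_sub_lt_neg_log_one_sub (hx0 : 0 < x) (hx1 : x < 1) :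
    2 * x / (2 - x) < -log (1 - x) := by
  have h : 0 < 1 - x := by linarith
  have h2 : 2 - x ≠ 0 := by linarith
  have key := lt_log_one_add_of_pos (div_pos hx0 h)
  rw [neg_log_one_sub_eq_log_one_add_div hx1]
  convert key using 1
  field_simp
  ring

lemma neg_log_one_sub_lt_div_one_sub (hx0 : 0 < x) (hx1 : x < 1) :
    -log (1 - x) < x / (1 - x) := by
  have h : 0 < x / (1 - x) := div_pos hx0 (by linarith)
  rw [neg_log_one_sub_eq_log_one_add_div hx1]
  simpa using log_lt_sub_one_of_pos (by positivity) (ne_of_gt (lt_add_of_pos_right 1 h))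

lemma neg_log_one_sub_pos (hx0 : 0 < x) (hx1 : x < 1) : 0 < -log (1 - x) :=
  neg_pos.2 (log_neg (by linarith) (by linarith))

lemma one_div_neg_log_one_sub_lt (hx0 : 0 < x) (hx1 : x < 1) :
    1 / -log (1 - x) < 1 / x - 1 / 2 := by
  have h : 0 < 2 - x := by linarith
  calc 1 / -log (1 - x) < 1 / (2 * x / (2 - x)) :=
        one_div_lt_one_div_of_lt (by positivity) (two_mul_div_two_sub_lt_neg_log_one_sub hx0 hx1)
    _ = 1 / x - 1 / 2 := by field_simp

lemma one_div_sub_one_lt_one_div_neg_log_one_sub (hx0 : 0 < x) (hx1 : x < 1) :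
    1 / x - 1 < 1 / -log (1 - x) := by
  have h : 1 - x ≠ 0 := by linarith
  calc 1 / x - 1 = 1 / (x / (1 - x)) := by field_simp
    _ < 1 / -log (1 - x) :=
        one_div_lt_one_div_of_lt (neg_log_one_sub_pos hx0 hx1)
          (neg_log_one_sub_lt_div_one_sub hx0 hx1)

lemma one_div_neg_log_one_sub_add_lt {a b c : ℝ} (ha0 : 0 < a) (ha1 : a < 1) (hb0 : 0 < b)
    (hb1 : b < 1) (hc0 : 0 < c) (habc : 1 / a + 1 / b = 1 / c) :
    1 / -log (1 - a) + 1 / -log (1 - b) < 1 / -log (1 - c) := by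
  have hca : c < a := by
    have : 1 / a < 1 / c := by linarith [one_div_pos.2 hb0]
    exact (one_div_lt_one_div ha0 hc0).1 this
  linarith [one_div_neg_log_one_sub_lt ha0 ha1, one_div_neg_log_one_sub_lt hb0 hb1,
    one_div_sub_one_lt_one_div_neg_log_one_sub hc0 (hca.trans ha1)]

end Real

theorem stmt_8_general (δ ν : ℝ) (hδ0 : 0 < δ)
    (hν1 : -1 + 2 * δ < ν) (hν2 : ν < 1 - 2 * δ) :
    1 / (-Real.log (1 - δ)) >
      1 / (-Real.log (1 - 2 * δ / (1 + ν))) + 1 / (-Real.log (1 - 2 * δ / (1 - ν))) := by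
  have hp : 0 < 1 + ν := by linarith
  have hm : 0 < 1 - ν := by linarith
  have hsum : 1 / (2 * δ / (1 + ν)) + 1 / (2 * δ / (1 - ν)) = 1 / δ := by
    field_simp
    ring
  exact Real.one_div_neg_log_one_sub_add_lt (by positivity) ((div_lt_one hp).2 (by linarith))
    (by positivity) ((div_lt_one hm).2 (by linarith)) hδ0 hsum

/-- **Example 1, inequality (4.16).** For `δ ∈ (0, 1/2)` and `ν ∈ (-1+2δ, 1-2δ)`:
`1/|log(1-δ)| > 1/|log(1 - 2δ/(1+ν))| + 1/|log(1 - 2δ/(1-ν))|`. -/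
theorem stmt_8 (δ ν : ℝ) (hδ0 : 0 < δ) (hδ1 : δ < 1 / 2)
    (hν1 : -1 + 2 * δ < ν) (hν2 : ν < 1 - 2 * δ) :
    1 / (-Real.log (1 - δ)) >
      1 / (-Real.log (1 - 2 * δ / (1 + ν))) + 1 / (-Real.log (1 - 2 * δ / (1 - ν))) :=
  stmt_8_general δ ν hδ0 hν1 hν2
end

section
/- (Example 1, maximum of f) Let δ ∈ (0, 1/2) and define f(ν) = 1/|log(1 − 2δ/(1+ν))| + 1/|log(1 − 2δ/(1−ν))| for ν ∈ (−1+2δ, 1−2δ). Then for every ν in this interval, f(ν) ≤ f(0) = 2/|log(1−2δ)|. -/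
/-!
With `c = 2δ` and `φ x = 1 / (log x - log (x - c)) = 1 / |log (1 - c / x)|` we have
`f ν = φ (1 + ν) + φ (1 - ν)`, so the bound `f ν ≤ 2 φ 1 = f 0` is the midpoint inequality for
`φ`, which is concave on `(c, ∞)`. Indeed `φ' = c / H` with `H x = x (x - c) L²`,
`L = log x - log (x - c)`, and `H' = L ((2x - c) L - 2c) ≥ 0` because
`L ≥ 2c / (2x - c)`, the first term of the series of `log ((1 + t) / (1 - t))` at
`t = c / (2x - c)`.
-/

open Real Set

theorem two_div_le_log_one_add_inv {a : ℝ} (ha : 0 < a) : 2 / (2 * a + 1) ≤ log (1 + a⁻¹) := by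
  simpa [div_eq_mul_inv] using le_hasSum (hasSum_log_one_add_inv ha) 0 fun k _ => by positivity

section LogGap

variable {c x : ℝ}

theorem log_sub_log_sub_pos (hx : c < x) (hc : 0 < c) : 0 < log x - log (x - c) :=
  sub_pos.2 (log_lt_log (sub_pos.2 hx) (by linarith))

theorem neg_log_one_sub_div (hx : c < x) (hc : 0 ≤ c) : -log (1 - c / x) = log x - log (x - c) := by
  have hx0 : 0 < x := by linarith
  rw [one_sub_div hx0.ne', log_div (sub_pos.2 hx).ne' hx0.ne']
  ring

theorem two_mul_div_le_log_sub_log_sub (hx : c < x) (hc : 0 < c) :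
    2 * c / (2 * x - c) ≤ log x - log (x - c) := by
  have hxc : 0 < x - c := sub_pos.2 hx
  have h := two_div_le_log_one_add_inv (div_pos hxc hc)
  have e1 : 2 / (2 * ((x - c) / c) + 1) = 2 * c / (2 * x - c) := by
    have : 2 * x - c ≠ 0 := by linarith
    field_simp; ring
  have e2 : 1 + ((x - c) / c)⁻¹ = x / (x - c) := by
    field_simp; ring
  rwa [e1, e2, log_div (by linarith) hxc.ne'] at h

theorem hasDerivAt_log_sub_log_sub (hx : c < x) (hc : 0 ≤ c) :
    HasDerivAt (fun y => log y - log (y - c)) (-c / (x * (x - c))) x := by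
  have hx0 : 0 < x := by linarith
  have hxc : 0 < x - c := sub_pos.2 hx
  have h : HasDerivAt (fun y => log y - log (y - c)) (x⁻¹ - 1 / (x - c)) x :=
    (hasDerivAt_log hx0.ne').sub (((hasDerivAt_id' x).sub_const c).log hxc.ne')
  exact h.congr_deriv (by field_simp; ring)

theorem hasDerivAt_mul_sub_mul_log_sub_log_sub_sq (hx : c < x) (hc : 0 ≤ c) :
    HasDerivAt (fun y => y * (y - c) * (log y - log (y - c)) ^ 2)
      ((log x - log (x - c)) * ((2 * x - c) * (log x - log (x - c)) - 2 * c)) x := by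
  have hx0 : x ≠ 0 := by linarith
  have hxc : x - c ≠ 0 := by linarith
  have h := ((hasDerivAt_id' x).mul ((hasDerivAt_id' x).sub_const c)).mul
    ((hasDerivAt_log_sub_log_sub hx hc).pow 2)
  simp only [Pi.mul_apply, Pi.pow_apply] at h
  exact h.congr_deriv (by field_simp; ring)

theorem hasDerivAt_one_div_log_sub_log_sub (hx : c < x) (hc : 0 < c) :
    HasDerivAt (fun y => 1 / (log y - log (y - c)))
      (c / (x * (x - c) * (log x - log (x - c)) ^ 2)) x := by
  have h := (hasDerivAt_log_sub_log_sub hx hc.le).inv (log_sub_log_sub_pos hx hc).ne'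
  simp only [one_div]
  exact h.congr_deriv (by field_simp)

theorem monotoneOn_mul_sub_mul_log_sub_log_sub_sq (hc : 0 < c) :
    MonotoneOn (fun y => y * (y - c) * (log y - log (y - c)) ^ 2) (Ioi c) := by
  have hderiv (y : ℝ) (hy : y ∈ Ioi c) :=
    hasDerivAt_mul_sub_mul_log_sub_log_sub_sq (mem_Ioi.1 hy) hc.le
  refine monotoneOn_of_hasDerivWithinAt_nonneg (convex_Ioi c)
    (fun y hy => (hderiv y hy).continuousAt.continuousWithinAt)
    (fun y hy => (hderiv y (interior_subset hy)).hasDerivWithinAt) fun y hy => ?_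
  rw [interior_Ioi] at hy
  have hy : c < y := hy
  have hL := two_mul_div_le_log_sub_log_sub hy hc
  rw [div_le_iff₀' (by linarith)] at hL
  exact mul_nonneg (log_sub_log_sub_pos hy hc).le (by linarith)

theorem concaveOn_one_div_log_sub_log_sub (hc : 0 < c) :
    ConcaveOn ℝ (Ioi c) (fun y => 1 / (log y - log (y - c))) := by
  have hderiv (y : ℝ) (hy : y ∈ Ioi c) :=
    hasDerivAt_one_div_log_sub_log_sub (mem_Ioi.1 hy) hc
  refine AntitoneOn.concaveOn_of_deriv (convex_Ioi c)
    (fun y hy => (hderiv y hy).continuousAt.continuousWithinAt)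
    (fun y hy => (hderiv y (interior_subset hy)).differentiableAt.differentiableWithinAt) ?_
  rw [interior_Ioi]
  intro a ha b hb hab
  rw [(hderiv a ha).deriv, (hderiv b hb).deriv]
  have hpos : 0 < a * (a - c) * (log a - log (a - c)) ^ 2 := by
    have := log_sub_log_sub_pos (mem_Ioi.1 ha) hc
    have : 0 < a - c := sub_pos.2 ha
    have : 0 < a := by linarith
    positivity
  exact div_le_div_of_nonneg_left hc.le hpos
    (monotoneOn_mul_sub_mul_log_sub_log_sub_sq hc ha hb hab)

end LogGap

theorem stmt_9_general (δ : ℝ) (hδ0 : 0 < δ)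
    (f : ℝ → ℝ)
    (hf : ∀ ν, f ν = 1 / (-Real.log (1 - 2 * δ / (1 + ν)))
        + 1 / (-Real.log (1 - 2 * δ / (1 - ν)))) :
    (∀ ν ∈ Set.Ioo (-1 + 2 * δ) (1 - 2 * δ), f ν ≤ f 0) ∧
      f 0 = 2 / (-Real.log (1 - 2 * δ)) := by
  have hf0 : f 0 = 2 / -log (1 - 2 * δ) := by
    rw [hf]; norm_num; ring
  refine ⟨fun ν hν => ?_, hf0⟩
  obtain ⟨hν1, hν2⟩ := hν
  have hc : 0 < 2 * δ := by linarith
  have h1 : 2 * δ < 1 + ν := by linarith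
  have h2 : 2 * δ < 1 - ν := by linarith
  have hmid := (concaveOn_one_div_log_sub_log_sub hc).2 h1 h2
    (by norm_num : (0 : ℝ) ≤ 1 / 2) (by norm_num : (0 : ℝ) ≤ 1 / 2) (by norm_num)
  rw [hf, hf0, neg_log_one_sub_div h1 hc.le, neg_log_one_sub_div h2 hc.le]
  have hmid' : (1 : ℝ) / 2 * (1 + ν) + 1 / 2 * (1 - ν) = 1 := by ring
  simp only [smul_eq_mul, hmid', log_one, zero_sub] at hmid
  linarith [show 2 / -log (1 - 2 * δ) = 2 * (1 / -log (1 - 2 * δ)) by ring]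

/-- **Example 1, maximum of `f`.** For `δ ∈ (0, 1/2)` and
`f(ν) = 1/|log(1 - 2δ/(1+ν))| + 1/|log(1 - 2δ/(1-ν))|`, every `ν ∈ (-1+2δ, 1-2δ)`
satisfies `f(ν) ≤ f(0) = 2/|log(1-2δ)|`. -/
theorem stmt_9 (δ : ℝ) (hδ0 : 0 < δ) (hδ1 : δ < 1 / 2)
    (f : ℝ → ℝ)
    (hf : ∀ ν, f ν = 1 / (-Real.log (1 - 2 * δ / (1 + ν)))
        + 1 / (-Real.log (1 - 2 * δ / (1 - ν)))) :
    (∀ ν ∈ Set.Ioo (-1 + 2 * δ) (1 - 2 * δ), f ν ≤ f 0) ∧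
      f 0 = 2 / (-Real.log (1 - 2 * δ)) :=
  stmt_9_general δ hδ0 f hf
end

section
/- (Example 1, comparison of bounds) Let δ ∈ (0, 1/2), ν ∈ (−1+2δ, 1−2δ), μ ∈ (−1, 1), and let m > 1 be a real number. Set δ₁ = 2δ/(1+ν) and δ₄ = 2δ/(1−ν). Then log[(m/2)(1+μ)]/|log(1−δ₁)| + log[(m/2)(1−μ)]/|log(1−δ₄)| < (log m)/|log(1−δ)|. -/
/-!
With `t₁ = (1 + ν) / 2` and `t₄ = (1 - ν) / 2` we have `δ₁ = δ / t₁`, `δ₄ = δ / t₄` and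
`t₁ + t₄ = 1`. Bernoulli's inequality `(1 - δ) ^ (1 / t) ≥ 1 - δ / t` for `t ≤ 1` gives
`|log (1 - δ / t)| ≥ |log (1 - δ)| / t`, so each term on the left is at most
`tᵢ · max 0 (log aᵢ) / |log (1 - δ)|` with `a₁, a₄ = (m / 2)(1 ± μ)`, and `0 < aᵢ < m` makes the convex combination of
these numerators strictly smaller than `log m`.
-/

open Real

lemma log_one_sub_div_le {δ t : ℝ} (hδt : δ < t) (ht : 0 < t) (ht1 : t ≤ 1) :
    log (1 - δ / t) ≤ log (1 - δ) / t := by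
  have hbernoulli : 1 - δ / t ≤ (1 - δ) ^ (1 / t) := by
    have h := one_add_mul_self_le_rpow_one_add (s := -δ) (by linarith)
      ((one_le_div ht).mpr ht1)
    convert h using 2 <;> ring
  have hpos : 0 < 1 - δ / t := by rw [sub_pos, div_lt_one ht]; exact hδt
  calc log (1 - δ / t) ≤ log ((1 - δ) ^ (1 / t)) := log_le_log hpos hbernoulli
    _ = log (1 - δ) / t := by rw [log_rpow (by linarith)]; ring

lemma div_neg_log_one_sub_div_le {δ t : ℝ} (x : ℝ) (hδ : 0 < δ) (hδt : δ < t) (ht1 : t ≤ 1) :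
    x / -log (1 - δ / t) ≤ t * max 0 x / -log (1 - δ) := by
  have ht : 0 < t := hδ.trans hδt
  have hc : 0 < -log (1 - δ) := neg_pos.mpr (log_neg (by linarith) (by linarith))
  have hD : -log (1 - δ) / t ≤ -log (1 - δ / t) := by
    rw [neg_div, neg_le_neg_iff]; exact log_one_sub_div_le hδt ht ht1
  calc x / -log (1 - δ / t) ≤ max 0 x / -log (1 - δ / t) :=
        div_le_div_of_nonneg_right (le_max_right 0 x) ((div_pos hc ht).le.trans hD)
    _ ≤ max 0 x / (-log (1 - δ) / t) :=
        div_le_div_of_nonneg_left (le_max_left 0 x) (by positivity) hD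
    _ = t * max 0 x / -log (1 - δ) := by field_simp

lemma max_zero_log_lt_log {a m : ℝ} (ha : 0 < a) (ham : a < m) (hm : 1 < m) :
    max 0 (log a) < log m :=
  max_lt (log_pos hm) (log_lt_log ha ham)

theorem stmt_12_general (δ ν μ m : ℝ) (hδ0 : 0 < δ)
    (hν1 : -1 + 2 * δ < ν) (hν2 : ν < 1 - 2 * δ)
    (hμ1 : -1 < μ) (hμ2 : μ < 1) (hm : 1 < m)
    (δ₁ δ₄ : ℝ) (hδ₁ : δ₁ = 2 * δ / (1 + ν)) (hδ₄ : δ₄ = 2 * δ / (1 - ν)) :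
    Real.log (m / 2 * (1 + μ)) / (-Real.log (1 - δ₁))
        + Real.log (m / 2 * (1 - μ)) / (-Real.log (1 - δ₄))
      < Real.log m / (-Real.log (1 - δ)) := by
  have hδ₁' : δ₁ = δ / ((1 + ν) / 2) := by rw [hδ₁, div_div_eq_mul_div, mul_comm]
  have hδ₄' : δ₄ = δ / ((1 - ν) / 2) := by rw [hδ₄, div_div_eq_mul_div, mul_comm]
  have hc : 0 < -log (1 - δ) := neg_pos.mpr (log_neg (by linarith) (by linarith))
  have h₁ := div_neg_log_one_sub_div_le (log (m / 2 * (1 + μ))) hδ0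
    (t := (1 + ν) / 2) (by linarith) (by linarith)
  have h₄ := div_neg_log_one_sub_div_le (log (m / 2 * (1 - μ))) hδ0
    (t := (1 - ν) / 2) (by linarith) (by linarith)
  have ha := max_zero_log_lt_log (a := m / 2 * (1 + μ)) (by nlinarith) (by nlinarith) hm
  have hb := max_zero_log_lt_log (a := m / 2 * (1 - μ)) (by nlinarith) (by nlinarith) hm
  rw [hδ₁', hδ₄']
  calc _ ≤ ((1 + ν) / 2 * max 0 (log (m / 2 * (1 + μ)))
          + (1 - ν) / 2 * max 0 (log (m / 2 * (1 - μ)))) / -log (1 - δ) :=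
        (add_le_add h₁ h₄).trans_eq (add_div _ _ _).symm
    _ < ((1 + ν) / 2 * log m + (1 - ν) / 2 * log m) / -log (1 - δ) := by
        gcongr
        · linarith
        · linarith
    _ = log m / -log (1 - δ) := by ring

/-- **Example 1, comparison of bounds.** For `δ ∈ (0, 1/2)`, `ν ∈ (-1+2δ, 1-2δ)`,
`μ ∈ (-1, 1)`, `m > 1`, with `δ₁ = 2δ/(1+ν)` and `δ₄ = 2δ/(1-ν)`:
`log[(m/2)(1+μ)]/|log(1-δ₁)| + log[(m/2)(1-μ)]/|log(1-δ₄)| < log m / |log(1-δ)|`. -/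
theorem stmt_12 (δ ν μ m : ℝ) (hδ0 : 0 < δ) (hδ1 : δ < 1 / 2)
    (hν1 : -1 + 2 * δ < ν) (hν2 : ν < 1 - 2 * δ)
    (hμ1 : -1 < μ) (hμ2 : μ < 1) (hm : 1 < m)
    (δ₁ δ₄ : ℝ) (hδ₁ : δ₁ = 2 * δ / (1 + ν)) (hδ₄ : δ₄ = 2 * δ / (1 - ν)) :
    Real.log (m / 2 * (1 + μ)) / (-Real.log (1 - δ₁))
        + Real.log (m / 2 * (1 - μ)) / (-Real.log (1 - δ₄))
      < Real.log m / (-Real.log (1 - δ)) :=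
  stmt_12_general δ ν μ m hδ0 hν1 hν2 hμ1 hμ2 hm δ₁ δ₄ hδ₁ hδ₄
end

section
/- (Block-diagonal case, bound (4.15)) Let M be a 0–1 matrix whose rows are split into a top group of m₁ rows and a bottom group of m₂ rows, and whose columns are split into a left group of n₁ columns and a right group of n₂ columns (m₁, m₂, n₁, n₂ ≥ 1). Suppose every top row has all its ones in the left columns with density at least δ₁ ∈ (0,1) there, and every bottom row has all its ones in the right columns with density at least δ₄ ∈ (0,1) there. If k₁ ≤ n₁ and k₂ ≤ n₂ are natural numbers with k₁ > (log m₁)/|log(1−δ₁)| and k₂ > (log m₂)/|log(1−δ₄)|, then there exist a set J₁ of left columns with |J₁| = k₁ and a set J₂ of right columns with |J₂| = k₂ such that J₁ ∪ J₂ covers every row of M. -/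
/-!
A uniformly random `k`-set of columns misses the ones of a row of density at least `δ` with
probability `C(n - d, k) / C(n, k) ≤ (1 - δ)^k`, so a union bound over the `m` rows leaves a
covering `k`-set as soon as `m (1 - δ)^k < 1`, which is what `k > log m / |log (1 - δ)|` says.
For a block-diagonal matrix the two diagonal blocks are covered independently.
-/

open Finset

theorem choose_sub_le_choose_mul_one_sub_pow {n d : ℕ} {δ : ℝ} (hd : δ * n ≤ d) (hdn : d ≤ n)
    (k : ℕ) : ((n - d).choose k : ℝ) ≤ n.choose k * (1 - δ) ^ k := by
  obtain rfl | hn := n.eq_zero_or_pos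
  · obtain rfl : d = 0 := by omega
    cases k <;> simp
  have hn' : (0 : ℝ) < n := by exact_mod_cast hn
  have hnd_le : ((n - d : ℕ) : ℝ) ≤ (1 - δ) * n := by
    rw [Nat.cast_sub hdn]
    linarith
  refine le_of_mul_le_mul_right ?_ (pow_pos hn' k)
  calc ((n - d).choose k : ℝ) * (n : ℝ) ^ k
      ≤ n.choose k * ((n - d : ℕ) : ℝ) ^ k := by
        exact_mod_cast Nat.choose_mul_pow_le_choose_mul_pow (Nat.sub_le n d) k
    _ ≤ n.choose k * ((1 - δ) * n) ^ k := by gcongr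
    _ = n.choose k * (1 - δ) ^ k * (n : ℝ) ^ k := by rw [mul_pow, mul_assoc]

theorem exists_card_eq_forall_exists_mem_of_card_mul_pow_lt_one {ι κ : Type*} [Fintype ι]
    [Fintype κ] [DecidableEq κ] (S : ι → Finset κ) {δ : ℝ} {k : ℕ}
    (hS : ∀ i, δ * Fintype.card κ ≤ #(S i)) (hk : k ≤ Fintype.card κ)
    (hδk : Fintype.card ι * (1 - δ) ^ k < 1) :
    ∃ J : Finset κ, #J = k ∧ ∀ i, ∃ j ∈ J, j ∈ S i := by
  set n := Fintype.card κ
  by_contra! hmiss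
  have hsub : powersetCard k univ ⊆ univ.biUnion fun i => powersetCard k (S i)ᶜ := by
    intro J hJ
    obtain ⟨i, hi⟩ := hmiss J (mem_powersetCard.1 hJ).2
    simp only [mem_biUnion, mem_univ, true_and, mem_powersetCard]
    exact ⟨i, fun j hj => mem_compl.2 (hi j hj), (mem_powersetCard.1 hJ).2⟩
  have hcount : (n.choose k : ℝ) ≤ ∑ i, ((n - #(S i)).choose k : ℝ) := by
    have := (card_le_card hsub).trans card_biUnion_le
    simp only [card_powersetCard, card_compl, card_univ] at this
    exact_mod_cast this
  have hpos : (0 : ℝ) < n.choose k := by exact_mod_cast Nat.choose_pos hk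
  have hbound : ∑ i, ((n - #(S i)).choose k : ℝ) ≤ Fintype.card ι * (n.choose k * (1 - δ) ^ k) :=
    calc ∑ i, ((n - #(S i)).choose k : ℝ)
        ≤ ∑ _i : ι, (n.choose k : ℝ) * (1 - δ) ^ k :=
          sum_le_sum fun i _ => choose_sub_le_choose_mul_one_sub_pow (hS i) (card_le_univ _) k
      _ = _ := by simp
  linarith [mul_lt_mul_of_pos_left hδk hpos]

theorem card_mul_one_sub_pow_lt_one {m k : ℕ} {δ : ℝ} (hδ : 0 < δ ∧ δ < 1)
    (hk : (k : ℝ) > Real.log m / (-Real.log (1 - δ))) : (m : ℝ) * (1 - δ) ^ k < 1 := by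
  obtain rfl | hm := m.eq_zero_or_pos
  · simp
  have h1δ : 0 < 1 - δ := by linarith [hδ.2]
  have hlog : 0 < -Real.log (1 - δ) := neg_pos.2 (Real.log_neg h1δ (by linarith [hδ.1]))
  have hm' : (0 : ℝ) < m := by exact_mod_cast hm
  rw [← Real.log_neg_iff (by positivity), Real.log_mul hm'.ne' (by positivity), Real.log_pow]
  linarith [(div_lt_iff₀ hlog).1 hk]

theorem exists_cover_of_density {ι κ : Type*} [Fintype ι] [Fintype κ] (A : ι → κ → Bool)
    {δ : ℝ} (hδ : 0 < δ ∧ δ < 1)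
    (hA : ∀ i, δ ≤ (#(univ.filter fun j => A i j = true) : ℝ) / Fintype.card κ)
    {k : ℕ} (hk : k ≤ Fintype.card κ)
    (hklog : (k : ℝ) > Real.log (Fintype.card ι) / (-Real.log (1 - δ))) :
    ∃ J : Finset κ, #J = k ∧ ∀ i, ∃ j ∈ J, A i j = true := by
  classical
  have hS i : δ * Fintype.card κ ≤ #(univ.filter fun j => A i j = true) :=
    mul_le_of_le_div₀ (Nat.cast_nonneg _) (Nat.cast_nonneg _) (hA i)
  obtain ⟨J, hJ, hcover⟩ := exists_card_eq_forall_exists_mem_of_card_mul_pow_lt_one _ hS hk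
    (card_mul_one_sub_pow_lt_one hδ hklog)
  exact ⟨J, hJ, fun i => by simpa using hcover i⟩

theorem stmt_15_general {m₁ m₂ n₁ n₂ : ℕ}
    (M : Fin m₁ ⊕ Fin m₂ → Fin n₁ ⊕ Fin n₂ → Bool)
    (δ₁ δ₄ : ℝ) (hδ₁ : 0 < δ₁ ∧ δ₁ < 1) (hδ₄ : 0 < δ₄ ∧ δ₄ < 1)
    (htop : ∀ i : Fin m₁,
      δ₁ ≤ ((univ.filter (fun j : Fin n₁ => M (Sum.inl i) (Sum.inl j) = true)).card : ℝ) / (n₁ : ℝ))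
    (hbot : ∀ i : Fin m₂,
      δ₄ ≤ ((univ.filter (fun j : Fin n₂ => M (Sum.inr i) (Sum.inr j) = true)).card : ℝ) / (n₂ : ℝ))
    (k₁ k₂ : ℕ) (hk₁ : k₁ ≤ n₁) (hk₂ : k₂ ≤ n₂)
    (hk₁log : (k₁ : ℝ) > Real.log m₁ / (-Real.log (1 - δ₁)))
    (hk₂log : (k₂ : ℝ) > Real.log m₂ / (-Real.log (1 - δ₄))) :
    ∃ J₁ : Finset (Fin n₁), ∃ J₂ : Finset (Fin n₂),
      J₁.card = k₁ ∧ J₂.card = k₂ ∧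
      ∀ i : Fin m₁ ⊕ Fin m₂,
        (∃ j ∈ J₁, M i (Sum.inl j) = true) ∨ (∃ j ∈ J₂, M i (Sum.inr j) = true) := by
  obtain ⟨J₁, hJ₁, hcover₁⟩ := exists_cover_of_density (fun i j => M (Sum.inl i) (Sum.inl j))
    hδ₁ (by simpa using htop) (by simpa using hk₁) (by simpa using hk₁log)
  obtain ⟨J₂, hJ₂, hcover₂⟩ := exists_cover_of_density (fun i j => M (Sum.inr i) (Sum.inr j))
    hδ₄ (by simpa using hbot) (by simpa using hk₂) (by simpa using hk₂log)
  refine ⟨J₁, J₂, hJ₁, hJ₂, ?_⟩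
  rintro (i | i)
  · exact Or.inl (hcover₁ i)
  · exact Or.inr (hcover₂ i)

/-- **Block-diagonal case (bound (4.15)).** Let `M` be a 0–1 matrix with rows split into
a top group of `m₁` rows and a bottom group of `m₂` rows, and columns split into a left
group of `n₁` columns and a right group of `n₂` columns. Suppose every top row has all
its ones in the left columns with density at least `δ₁ ∈ (0,1)` there, and every bottom
row has all its ones in the right columns with density at least `δ₄ ∈ (0,1)` there.
If `k₁ ≤ n₁`, `k₂ ≤ n₂` satisfy `k₁ > log m₁ / |log(1-δ₁)|` and
`k₂ > log m₂ / |log(1-δ₄)|`, then there are `J₁`, `J₂` of left resp. right columns with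
`|J₁| = k₁`, `|J₂| = k₂` covering every row of `M`. -/
theorem stmt_15 {m₁ m₂ n₁ n₂ : ℕ}
    (hm₁ : 1 ≤ m₁) (hm₂ : 1 ≤ m₂) (hn₁ : 1 ≤ n₁) (hn₂ : 1 ≤ n₂)
    (M : Fin m₁ ⊕ Fin m₂ → Fin n₁ ⊕ Fin n₂ → Bool)
    (δ₁ δ₄ : ℝ) (hδ₁ : 0 < δ₁ ∧ δ₁ < 1) (hδ₄ : 0 < δ₄ ∧ δ₄ < 1)
    (htop0 : ∀ (i : Fin m₁) (j : Fin n₂), M (Sum.inl i) (Sum.inr j) = false)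
    (hbot0 : ∀ (i : Fin m₂) (j : Fin n₁), M (Sum.inr i) (Sum.inl j) = false)
    (htop : ∀ i : Fin m₁,
      δ₁ ≤ ((univ.filter (fun j : Fin n₁ => M (Sum.inl i) (Sum.inl j) = true)).card : ℝ) / (n₁ : ℝ))
    (hbot : ∀ i : Fin m₂,
      δ₄ ≤ ((univ.filter (fun j : Fin n₂ => M (Sum.inr i) (Sum.inr j) = true)).card : ℝ) / (n₂ : ℝ))
    (k₁ k₂ : ℕ) (hk₁ : k₁ ≤ n₁) (hk₂ : k₂ ≤ n₂)
    (hk₁log : (k₁ : ℝ) > Real.log m₁ / (-Real.log (1 - δ₁)))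
    (hk₂log : (k₂ : ℝ) > Real.log m₂ / (-Real.log (1 - δ₄))) :
    ∃ J₁ : Finset (Fin n₁), ∃ J₂ : Finset (Fin n₂),
      J₁.card = k₁ ∧ J₂.card = k₂ ∧
      ∀ i : Fin m₁ ⊕ Fin m₂,
        (∃ j ∈ J₁, M i (Sum.inl j) = true) ∨ (∃ j ∈ J₂, M i (Sum.inr j) = true) :=
  stmt_15_general M δ₁ δ₄ hδ₁ hδ₄ htop hbot k₁ k₂ hk₁ hk₂ hk₁log hk₂log
end
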